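/- arXiv:math/9503217 — 7 statements merged into one kernel-verified Lean document; each statement's English description precedes it below -/
import Mathlib

section
/- If U ⊆ V are open subsets of a locally connected space X, V is Z-dense in X, and U is Z-dense in the subspace V, then U is Z-dense in X. -/
open Set Topology

/-- An open subset `U` is Z-dense if it meets every non-empty open connected set
in a non-empty connected set. -/
def IsZDense {X : Type*} [TopologicalSpace X] (U : Set X) : Prop :=
  IsOpen U ∧ ∀ C : Set X, IsOpen C → IsConnected C → IsConnected (U ∩ C)

/-- A subset is negligible if its complement is Z-dense. -/
def IsNegligible {X : Type*} [TopologicalSpace X] (I : Set X) : Prop :=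
  IsZDense Iᶜ

theorem isConnected_preimage_subtypeVal_iff {X : Type*} [TopologicalSpace X] {V s : Set X} :
    IsConnected (Subtype.val ⁻¹' s : Set V) ↔ IsConnected (V ∩ s) := by
  rw [IsConnected, IsConnected, ← image_nonempty (f := Subtype.val),
    ← IsInducing.subtypeVal.isPreconnected_image, Subtype.image_preimage_coe]

/-- If `U ⊆ V` are open, `V` is Z-dense in `X`, and `U` is Z-dense in the
subspace `V`, then `U` is Z-dense in `X`. -/
theorem IsZDense.trans {X : Type*} [TopologicalSpace X]
    {U V : Set X} (hUopen : IsOpen U) (hUV : U ⊆ V)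
    (hV : IsZDense V) (hU : IsZDense ((Subtype.val ⁻¹' U : Set ↥V))) :
    IsZDense U := by
  refine ⟨hUopen, fun C hC hCconn => ?_⟩
  have hVC : IsConnected (Subtype.val ⁻¹' C : Set V) :=
    isConnected_preimage_subtypeVal_iff.2 (hV.2 C hC hCconn)
  have hUVC := hU.2 _ (hC.preimage continuous_subtype_val) hVC
  rwa [← preimage_inter, isConnected_preimage_subtypeVal_iff,
    inter_eq_right.2 (inter_subset_left.trans hUV)] at hUVC
end

section
/- Let X be locally connected, I a negligible subset of X, and J a negligible subset of the subspace X − I. Then I ∪ J is negligible in X. -/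
open Set Topology

theorem Topology.IsInducing.isConnected_image {X Y : Type*} [TopologicalSpace X]
    [TopologicalSpace Y] {f : X → Y} (hf : IsInducing f) {s : Set X} :
    IsConnected (f '' s) ↔ IsConnected s := by
  rw [IsConnected, IsConnected, image_nonempty, hf.isPreconnected_image]

theorem IsZDense.image_val {X : Type*} [TopologicalSpace X] {U : Set X} (hU : IsZDense U)
    {V : Set U} (hV : IsZDense V) : IsZDense (Subtype.val '' V) := by
  refine ⟨hU.1.isOpenMap_subtype_val V hV.1, fun C hC hCconn => ?_⟩
  have hCU : IsConnected (Subtype.val ⁻¹' C : Set U) := by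
    rw [← IsInducing.subtypeVal.isConnected_image, Subtype.image_preimage_coe]
    exact hU.2 C hC hCconn
  rw [← image_inter_preimage, IsInducing.subtypeVal.isConnected_image]
  exact hV.2 _ (hC.preimage continuous_subtype_val) hCU

theorem IsNegligible.union_of_negligible_in_compl_general {X : Type*} [TopologicalSpace X]
    {I J : Set X} (hI : IsNegligible I)
    (hJ : IsNegligible ((Subtype.val ⁻¹' J : Set ↥(Iᶜ)))) :
    IsNegligible (I ∪ J) := by
  have hcompl : (I ∪ J)ᶜ = Subtype.val '' (Subtype.val ⁻¹' J : Set ↥(Iᶜ))ᶜ := by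
    rw [← preimage_compl, Subtype.image_preimage_coe, compl_union]
  unfold IsNegligible
  rw [hcompl]
  exact IsZDense.image_val hI hJ

/-- If `I` is negligible in `X` and `J ⊆ X − I` is negligible in the subspace
`X − I`, then `I ∪ J` is negligible in `X`. -/
theorem IsNegligible.union_of_negligible_in_compl {X : Type*} [TopologicalSpace X]
    [LocallyConnectedSpace X] {I J : Set X} (hI : IsNegligible I) (hJI : J ⊆ Iᶜ)
    (hJ : IsNegligible ((Subtype.val ⁻¹' J : Set ↥(Iᶜ)))) :
    IsNegligible (I ∪ J) :=
  IsNegligible.union_of_negligible_in_compl_general hI hJ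
end

section
/- Let X be a locally connected space and I ⊆ X a closed subset. Then I is negligible in X if and only if for each x ∈ I there is a neighborhood basis 𝒱ₓ at x such that for each V ∈ 𝒱ₓ, both V and V − I are connected and non-empty. -/
/-!
If arbitrarily small neighbourhoods `V` of every point have `V \ I` connected, then for an open
connected `C` the connected component `K` of `C \ I` through any point is all of `C \ I`: near each
point of `C` the set `X \ I` lies either inside `K` or outside it, and these two open conditions
cannot hold together at a point of `C` (small `V \ I` is non-empty), so connectedness of `C`
forces the first one everywhere on `C`.
-/

open Set Topology Filter

theorem Filter.exists_basis_iff_forall_mem {α : Type*} {l : Filter α} {p : Set α → Prop} :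
    (∃ 𝒱 : Set (Set α), (∀ V ∈ 𝒱, V ∈ l ∧ p V) ∧ ∀ N ∈ l, ∃ V ∈ 𝒱, V ⊆ N) ↔
      ∀ N ∈ l, ∃ V ∈ l, V ⊆ N ∧ p V := by
  constructor
  · rintro ⟨𝒱, h𝒱, hbasis⟩ N hN
    obtain ⟨V, hV, hVN⟩ := hbasis N hN
    exact ⟨V, (h𝒱 V hV).1, hVN, (h𝒱 V hV).2⟩
  · intro h
    exact ⟨{V | V ∈ l ∧ p V}, fun V hV => hV, fun N hN =>
      let ⟨V, hV, hVN, hpV⟩ := h N hN; ⟨V, ⟨hV, hpV⟩, hVN⟩⟩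

section

variable {X : Type*} [TopologicalSpace X]

def IsLocallyNonseparatingAt (I : Set X) (x : X) : Prop :=
  ∀ N ∈ 𝓝 x, ∃ V ∈ 𝓝 x, V ⊆ N ∧ IsConnected (V \ I)

theorem IsLocallyNonseparatingAt.of_notMem [LocallyConnectedSpace X] {I : Set X}
    (hI : IsClosed I) {x : X} (hx : x ∉ I) : IsLocallyNonseparatingAt I x := by
  intro N hN
  obtain ⟨V, hVN, hVo, hxV, hV⟩ := locallyConnectedSpace_iff_subsets_isOpen_isConnected.mp
    ‹_› x (N ∩ Iᶜ) (inter_mem hN (hI.isOpen_compl.mem_nhds hx))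
  refine ⟨V, hVo.mem_nhds hxV, hVN.trans inter_subset_left, ?_⟩
  rwa [sdiff_eq_left.mpr (disjoint_left.mpr fun y hy => (hVN hy).2)]

theorem IsLocallyNonseparatingAt.notMem_interior {I : Set X} {x : X}
    (h : IsLocallyNonseparatingAt I x) : x ∉ interior I := fun hx =>
  let ⟨_, _, hVI, hV⟩ := h _ (mem_interior_iff_mem_nhds.mp hx)
  let ⟨_, hyV, hyI⟩ := hV.nonempty
  hyI (hVI hyV)

theorem IsPreconnected.diff_of_isLocallyNonseparatingAt {C I : Set X} (hC : IsPreconnected C)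
    (hCo : IsOpen C) (h : ∀ x ∈ C, IsLocallyNonseparatingAt I x) : IsPreconnected (C \ I) := by
  rcases (C \ I).eq_empty_or_nonempty with hempty | ⟨y, hy⟩
  · rw [hempty]
    exact isPreconnected_empty
  set K := _root_.connectedComponentIn (C \ I) y
  have near_or_far : ∀ x ∈ C,
      (∀ᶠ z in 𝓝 x, z ∉ I → z ∈ K) ∨ ∀ᶠ z in 𝓝 x, z ∉ I → z ∉ K := by
    intro x hx
    obtain ⟨V, hV, hVC, hVI⟩ := h x hx C (hCo.mem_nhds hx)
    by_cases hmeet : ∃ w ∈ V \ I, w ∈ K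
    · obtain ⟨w, hwV, hwK⟩ := hmeet
      have hVK : V \ I ⊆ K := by
        rw [show K = _ from connectedComponentIn_eq hwK]
        exact hVI.isPreconnected.subset_connectedComponentIn hwV (sdiff_subset_sdiff_left hVC)
      left
      filter_upwards [hV] with z hzV hzI using hVK ⟨hzV, hzI⟩
    · right
      filter_upwards [hV] with z hzV hzI hzK using hmeet ⟨z, ⟨hzV, hzI⟩, hzK⟩
  have not_both : ∀ x ∈ C,
      ¬((∀ᶠ z in 𝓝 x, z ∉ I → z ∈ K) ∧ ∀ᶠ z in 𝓝 x, z ∉ I → z ∉ K) := by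
    rintro x hx ⟨hnear, hfar⟩
    refine (h x hx).notMem_interior (mem_interior_iff_mem_nhds.mpr ?_)
    filter_upwards [hnear, hfar] with z hzK hzK' using by_contra fun hzI => hzK' hzI (hzK hzI)
  obtain hnear | hfar := isPreconnected_iff_subset_of_disjoint.mp hC _ _
    (isOpen_setOfPred_eventually_nhds (p := fun z => z ∉ I → z ∈ K))
    (isOpen_setOfPred_eventually_nhds (p := fun z => z ∉ I → z ∉ K)) near_or_far
    (eq_empty_of_forall_notMem fun x ⟨hx, hnear, hfar⟩ => not_both x hx ⟨hnear, hfar⟩)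
  · have hK : C \ I ⊆ K := fun z hz => (hnear hz.1).self_of_nhds hz.2
    rw [hK.antisymm (connectedComponentIn_subset _ _)]
    exact isPreconnected_connectedComponentIn
  · exact absurd (mem_connectedComponentIn hy) ((hfar hy.1).self_of_nhds hy.2)

theorem IsConnected.diff_of_isLocallyNonseparatingAt {C I : Set X} (hC : IsConnected C)
    (hCo : IsOpen C) (h : ∀ x ∈ C, IsLocallyNonseparatingAt I x) : IsConnected (C \ I) := by
  obtain ⟨x, hx⟩ := hC.nonempty
  obtain ⟨V, -, hVC, hVI⟩ := h x hx C (hCo.mem_nhds hx)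
  exact ⟨hVI.nonempty.mono (sdiff_subset_sdiff_left hVC),
    hC.isPreconnected.diff_of_isLocallyNonseparatingAt hCo h⟩

end

/-- A closed subset `I` of a locally connected space is negligible iff each
`x ∈ I` has a neighborhood basis of sets `V` with both `V` and `V − I`
connected and non-empty. -/
theorem isNegligible_iff_nhds_basis {X : Type*} [TopologicalSpace X]
    [LocallyConnectedSpace X] {I : Set X} (hIc : IsClosed I) :
    IsNegligible I ↔
      ∀ x ∈ I, ∃ 𝒱 : Set (Set X),
        (∀ V ∈ 𝒱, V ∈ 𝓝 x ∧ IsConnected V ∧ IsConnected (V \ I)) ∧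
        (∀ N ∈ 𝓝 x, ∃ V ∈ 𝒱, V ⊆ N) := by
  constructor
  · rintro ⟨-, hZ⟩ x -
    refine exists_basis_iff_forall_mem.mpr fun N hN => ?_
    obtain ⟨V, hVN, hVo, hxV, hV⟩ :=
      locallyConnectedSpace_iff_subsets_isOpen_isConnected.mp ‹_› x N hN
    refine ⟨V, hVo.mem_nhds hxV, hVN, hV, ?_⟩
    simpa only [sdiff_eq_compl_inter] using hZ V hVo hV
  · intro h
    have hsep : ∀ x, IsLocallyNonseparatingAt I x := by
      intro x
      by_cases hx : x ∈ I
      · intro N hN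
        obtain ⟨V, hV, hVN, -, hVI⟩ := exists_basis_iff_forall_mem.mp (h x hx) N hN
        exact ⟨V, hV, hVN, hVI⟩
      · exact .of_notMem hIc hx
    refine ⟨hIc.isOpen_compl, fun C hCo hC => ?_⟩
    rw [← sdiff_eq_compl_inter]
    exact hC.diff_of_isLocallyNonseparatingAt hCo fun x _ => hsep x
end

section
/- Let X and Y be locally connected spaces, f : X → V a continuous function into a locally connected space V, and v : V → Y an open embedding. Then v ∘ f is diffuse if and only if f is diffuse. -/
open Set Topology

/-- A negligible subset element `(U, I)`: `U` open, `I ⊆ U`, the subspace `U`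
locally connected, and `I` negligible in the subspace `U`. -/
def NegligibleElem {Y : Type*} [TopologicalSpace Y] (U I : Set Y) : Prop :=
  IsOpen U ∧ I ⊆ U ∧ LocallyConnectedSpace ↥U ∧
    IsNegligible ((Subtype.val ⁻¹' I : Set ↥U))

/-- A continuous function is diffuse if it pulls back negligible subset elements
to negligible subset elements. -/
def Diffuse {X Y : Type*} [TopologicalSpace X] [TopologicalSpace Y] (f : X → Y) : Prop :=
  Continuous f ∧ ∀ U I : Set Y, NegligibleElem U I → NegligibleElem (f ⁻¹' U) (f ⁻¹' I)

lemma IsZDense.preimage_of_isOpenEmbedding {A B : Type*} [TopologicalSpace A]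
    [TopologicalSpace B] {g : A → B} (hg : IsOpenEmbedding g) {S : Set B}
    (hS : IsZDense S) : IsZDense (g ⁻¹' S) := by
  refine ⟨hS.1.preimage hg.continuous, fun C hC hCc => ?_⟩
  have h1 : IsConnected (g '' C) := hCc.image g hg.continuous.continuousOn
  have h2 := hS.2 (g '' C) (hg.isOpenMap C hC) h1
  have h3 : g ⁻¹' (S ∩ g '' C) = g ⁻¹' S ∩ C := by
    rw [preimage_inter, hg.injective.preimage_image]
  rw [← h3]
  exact h2.preimage_of_isOpenMap hg.injective hg.isOpenMap
    (fun x hx => (mem_image _ _ _).1 hx.2 |>.imp fun a ha => ha.2)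

lemma IsNegligible.preimage_of_isOpenEmbedding {A B : Type*} [TopologicalSpace A]
    [TopologicalSpace B] {g : A → B} (hg : IsOpenEmbedding g) {I : Set B}
    (hI : IsNegligible I) : IsNegligible (g ⁻¹' I) := by
  have := IsZDense.preimage_of_isOpenEmbedding hg (hI : IsZDense Iᶜ)
  rwa [IsNegligible, ← preimage_compl]

lemma NegligibleElem.preimage_of_isOpenEmbedding {A B : Type*} [TopologicalSpace A]
    [TopologicalSpace B] {g : A → B} (hg : IsOpenEmbedding g) {U I : Set B}
    (h : NegligibleElem U I) : NegligibleElem (g ⁻¹' U) (g ⁻¹' I) := by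
  obtain ⟨hU, hIU, hLC, hneg⟩ := h
  have hg' : IsOpenEmbedding (U.restrictPreimage g) := hg.restrictPreimage U
  refine ⟨hU.preimage hg.continuous, preimage_mono hIU, hg'.locallyConnectedSpace, ?_⟩
  have : (Subtype.val ⁻¹' (g ⁻¹' I) : Set ↥(g ⁻¹' U)) =
      (U.restrictPreimage g) ⁻¹' (Subtype.val ⁻¹' I : Set ↥U) := rfl
  rw [this]
  exact hneg.preimage_of_isOpenEmbedding hg'

lemma NegligibleElem.image_of_isOpenEmbedding {A B : Type*} [TopologicalSpace A]
    [TopologicalSpace B] {g : A → B} (hg : IsOpenEmbedding g) {U I : Set A}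
    (h : NegligibleElem U I) : NegligibleElem (g '' U) (g '' I) := by
  obtain ⟨hU, hIU, hLC, hneg⟩ := h
  have hemb : IsEmbedding (g ∘ (Subtype.val : ↥U → A)) :=
    hg.isEmbedding.comp IsEmbedding.subtypeVal
  have hrange : range (g ∘ (Subtype.val : ↥U → A)) = g '' U := by
    rw [range_comp, Subtype.range_val]
  let e : ↥U ≃ₜ ↥(g '' U) :=
    (IsEmbedding.toHomeomorph hemb).trans (Homeomorph.setCongr hrange)
  have hce : ∀ x : ↥U, (e x : B) = g ↑x := fun x => rfl
  refine ⟨hg.isOpenMap U hU, image_mono hIU,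
    e.symm.isOpenEmbedding.locallyConnectedSpace, ?_⟩
  have key : e.symm ⁻¹' (Subtype.val ⁻¹' I : Set ↥U) =
      (Subtype.val ⁻¹' (g '' I) : Set ↥(g '' U)) := by
    rw [Homeomorph.preimage_symm]
    ext ⟨y, hy⟩
    simp only [mem_image, mem_preimage]
    constructor
    · rintro ⟨x, hxI, hxe⟩
      refine ⟨↑x, hxI, ?_⟩
      have := congrArg (Subtype.val) hxe
      rw [hce] at this
      exact this
    · rintro ⟨i, hiI, hiy⟩
      obtain ⟨u, huU, huy⟩ := hy
      have hiU : i ∈ U := by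
        have : i = u := hg.injective (by rw [hiy, huy])
        rwa [this]
      exact ⟨⟨i, hiU⟩, hiI, Subtype.ext hiy⟩
  rw [← key]
  exact hneg.preimage_of_isOpenEmbedding e.symm.isOpenEmbedding

/-- For `v` an open embedding, `v ∘ f` is diffuse iff `f` is diffuse. -/
theorem diffuse_comp_isOpenEmbedding_iff {X V Y : Type*} [TopologicalSpace X]
    [LocallyConnectedSpace X] [TopologicalSpace V] [LocallyConnectedSpace V]
    [TopologicalSpace Y] [LocallyConnectedSpace Y]
    (f : X → V) (hf : Continuous f) (v : V → Y) (hv : IsOpenEmbedding v) :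
    Diffuse (v ∘ f) ↔ Diffuse f := by
  constructor
  · rintro ⟨-, hP⟩
    refine ⟨hf, fun U I hUI => ?_⟩
    have h1 := hP (v '' U) (v '' I) (hUI.image_of_isOpenEmbedding hv)
    have hU : (v ∘ f) ⁻¹' (v '' U) = f ⁻¹' U := by
      rw [preimage_comp, hv.injective.preimage_image]
    have hI : (v ∘ f) ⁻¹' (v '' I) = f ⁻¹' I := by
      rw [preimage_comp, hv.injective.preimage_image]
    rwa [hU, hI] at h1
  · rintro ⟨-, hP⟩
    refine ⟨hv.continuous.comp hf, fun U I hUI => ?_⟩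
    exact hP (v ⁻¹' U) (v ⁻¹' I) (hUI.preimage_of_isOpenEmbedding hv)
end

section
/- Let X and Y be locally connected spaces, f : X → Y continuous, and I ⊆ X a negligible subset. If the restriction of f to X − I is diffuse, then f is diffuse. -/
open Set Topology

/-!
Given a negligible element `(U, J)` of `Y`, let `C` be an open connected subset of `f⁻¹ U`.
As `X − I` is Z-dense, `C − I` is open and connected in `X − I`, so diffuseness of `f` on `X − I`
makes `(C − I) − f⁻¹ J` connected. This set is dense in the open set `C − f⁻¹ J`, since `X − I`
is dense (local connectedness of `X`), and a set lying between a connected set and its closure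
is connected.
-/

section

variable {X : Type*} [TopologicalSpace X]

theorem isConnected_image_val_iff {A : Set X} {s : Set A} :
    IsConnected (Subtype.val '' s) ↔ IsConnected s := by
  rw [IsConnected, IsConnected, IsInducing.subtypeVal.isPreconnected_image, image_nonempty]

theorem isConnected_preimage_val_iff {A s : Set X} :
    IsConnected (Subtype.val ⁻¹' s : Set A) ↔ IsConnected (A ∩ s) := by
  rw [← isConnected_image_val_iff, Subtype.image_preimage_coe]

theorem isNegligible_preimage_val_iff {U I : Set X} (hU : IsOpen U) :
    IsNegligible (Subtype.val ⁻¹' I : Set U) ↔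
      IsOpen (U \ I) ∧ ∀ C ⊆ U, IsOpen C → IsConnected C → IsConnected (C \ I) := by
  refine and_congr (by rw [← preimage_compl, hU.inter_preimage_val_iff, Set.sdiff_eq]) ⟨?_, ?_⟩
  · intro h C hCU hC hCc
    have hCc' : IsConnected (Subtype.val ⁻¹' C : Set U) := by
      rwa [isConnected_preimage_val_iff, inter_eq_right.2 hCU]
    have hCI := h _ (hC.preimage continuous_subtype_val) hCc'
    rw [inter_comm] at hCI
    rwa [← inter_eq_right.2 (sdiff_subset.trans hCU), ← isConnected_preimage_val_iff]
  · intro h C hC hCc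
    have hCI := h _ (Subtype.coe_image_subset U C) (hU.isOpenMap_subtype_val C hC)
      (isConnected_image_val_iff.2 hCc)
    rwa [← isConnected_image_val_iff, inter_comm, ← preimage_compl, image_inter_preimage,
      ← Set.sdiff_eq]

theorem IsZDense.dense [LocallyConnectedSpace X] {U : Set X} (hU : IsZDense U) : Dense U := by
  refine dense_iff_inter_open.2 fun O hO ⟨x, hxO⟩ => ?_
  have hx := isConnected_connectedComponentIn_iff.2 hxO
  obtain ⟨y, hyU, hy⟩ := (hU.2 _ hO.connectedComponentIn hx).nonempty
  exact ⟨y, connectedComponentIn_subset O x hy, hyU⟩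

theorem IsOpen.isConnected_of_isConnected_inter_dense {O D : Set X} (hO : IsOpen O)
    (hD : Dense D) (h : IsConnected (O ∩ D)) : IsConnected O :=
  h.subset_closure inter_subset_left (hD.open_subset_closure_inter hO)

end

theorem diffuse_of_diffuse_restrict_compl_negligible_general {X Y : Type*}
    [TopologicalSpace X] [LocallyConnectedSpace X]
    [TopologicalSpace Y]
    (f : X → Y) (hf : Continuous f) {I : Set X} (hI : IsNegligible I)
    (hres : Diffuse (fun x : ↥(Iᶜ) => f ↑x)) :
    Diffuse f := by
  obtain ⟨hg, hg_pullback⟩ := hres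
  refine ⟨hf, fun U J hUJ => ?_⟩
  obtain ⟨-, -, -, hJ'⟩ := hg_pullback U J hUJ
  obtain ⟨hU, hJU, -, hJ⟩ := hUJ
  have hV : IsOpen (f ⁻¹' U) := hU.preimage hf
  have hVJ : IsOpen (f ⁻¹' U \ f ⁻¹' J) :=
    ((isNegligible_preimage_val_iff hU).1 hJ).1.preimage hf
  refine ⟨hV, preimage_mono hJU, hV.locallyConnectedSpace,
    (isNegligible_preimage_val_iff hV).2 ⟨hVJ, fun C hCV hC hCc => ?_⟩⟩
  have hCJ : IsOpen (C \ f ⁻¹' J) := by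
    rw [← inter_eq_left.2 hCV, inter_sdiff_assoc]
    exact hC.inter hVJ
  have hCJ' : IsConnected (Iᶜ ∩ (C \ f ⁻¹' J)) := by
    have hJ'_conn := ((isNegligible_preimage_val_iff (hU.preimage hg)).1 hJ').2
    exact isConnected_preimage_val_iff.1 (hJ'_conn _ (fun x hx => hCV hx)
      (hC.preimage continuous_subtype_val) (isConnected_preimage_val_iff.2 (hI.2 C hC hCc)))
  exact hCJ.isConnected_of_isConnected_inter_dense hI.dense (by rwa [inter_comm])

/-- If `f` is continuous, `I` is negligible in `X` and the restriction of `f`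
to `X − I` is diffuse, then `f` is diffuse. -/
theorem diffuse_of_diffuse_restrict_compl_negligible {X Y : Type*}
    [TopologicalSpace X] [LocallyConnectedSpace X]
    [TopologicalSpace Y] [LocallyConnectedSpace Y]
    (f : X → Y) (hf : Continuous f) {I : Set X} (hI : IsNegligible I)
    (hres : Diffuse (fun x : ↥(Iᶜ) => f ↑x)) :
    Diffuse f :=
  diffuse_of_diffuse_restrict_compl_negligible_general f hf hI hres
end

section
/- Let G be a finite group acting by homeomorphisms on a locally connected space B with upper ramification set K negligible, and b : B → A the quotient map (open, continuous, surjective, with fibers the G-orbits). Suppose distinct points in any G-orbit can be separated by open sets. Let Y be a non-empty connected locally connected space and α, β : Y → B diffuse continuous maps with b ∘ α = b ∘ β. Then there exists g ∈ G with g·α(y) = β(y) for all y ∈ Y. -/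
open Set Topology

open Pointwise

/-- The upper ramification set of a group action: points having no neighborhood
`V` with `g • V ∩ V = ∅` for all non-identity `g`. -/
def upperRamification (G : Type*) {B : Type*} [Group G] [TopologicalSpace B]
    [MulAction G B] : Set B :=
  {x : B | ¬ ∃ V : Set B, IsOpen V ∧ x ∈ V ∧ ∀ g : G, g ≠ 1 → Disjoint (g • V) V}

/-
Outside the upper ramification set every point has a neighbourhood moved off itself by every
non-identity element, so near a point `y` with `α y ∉ K` the element `g` with `g • α = β` cannot
change: the coincidence set `{y | g • α y = β y}` is a neighbourhood of each of its points off
`α⁻¹ K`. Orbit separation makes the coincidence set closed. Since `α` is diffuse, the complement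
of `α⁻¹ K` is connected and dense in `Y`, so the coincidence set of the element found at one of
its points contains it, and hence is all of `Y`.
-/

namespace IsZDense

variable {X : Type*} [TopologicalSpace X] {U : Set X}

theorem preimage_homeomorph {Z : Type*} [TopologicalSpace Z] (e : X ≃ₜ Z) {U : Set Z}
    (h : IsZDense U) : IsZDense (e ⁻¹' U) := by
  refine ⟨h.1.preimage e.continuous, fun C hC hCc => ?_⟩
  have hinter : e ⁻¹' U ∩ C = e ⁻¹' (U ∩ e '' C) := by
    rw [preimage_inter, e.preimage_image]
  rw [hinter, e.isConnected_preimage]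
  exact h.2 _ (e.isOpenMap C hC) (hCc.image e e.continuous.continuousOn)

theorem isConnected (h : IsZDense U) (hX : IsConnected (univ : Set X)) : IsConnected U := by
  simpa using h.2 univ isOpen_univ hX

theorem dense_s18 [LocallyConnectedSpace X] (h : IsZDense U) : Dense U := by
  refine dense_iff_inter_open.2 fun V hV ⟨x, hxV⟩ => ?_
  obtain ⟨C, hCV, hC, hxC, hCc⟩ :=
    locallyConnectedSpace_iff_subsets_isOpen_isConnected.1 ‹_› x V (hV.mem_nhds hxV)
  obtain ⟨y, hyU, hyC⟩ := (h.2 C hC hCc).nonempty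
  exact ⟨y, hCV hyC, hyU⟩

end IsZDense

section Negligible

variable {X : Type*} [TopologicalSpace X] {I : Set X}

theorem IsNegligible.preimage_homeomorph {Z : Type*} [TopologicalSpace Z] (e : X ≃ₜ Z)
    {I : Set Z} (h : IsNegligible I) : IsNegligible (e ⁻¹' I) :=
  IsZDense.preimage_homeomorph e h

theorem negligibleElem_univ [LocallyConnectedSpace X] (h : IsNegligible I) :
    NegligibleElem univ I :=
  ⟨isOpen_univ, subset_univ I, isOpen_univ.locallyConnectedSpace,
    h.preimage_homeomorph (Homeomorph.Set.univ X)⟩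

theorem NegligibleElem.isNegligible_of_univ (h : NegligibleElem univ I) : IsNegligible I :=
  h.2.2.2.preimage_homeomorph (Homeomorph.Set.univ X).symm

theorem Diffuse.isNegligible_preimage {Z : Type*} [TopologicalSpace Z] [LocallyConnectedSpace Z]
    {f : X → Z} (hf : Diffuse f) {I : Set Z} (hI : IsNegligible I) : IsNegligible (f ⁻¹' I) :=
  NegligibleElem.isNegligible_of_univ (hf.2 univ I (negligibleElem_univ hI))

end Negligible

theorem IsPreconnected.eq_univ_of_isClosed {X : Type*} [TopologicalSpace X] {W E : Set X}
    (hW : IsPreconnected W) (hWd : Dense W) (hE : IsClosed E) (hWE : (W ∩ E).Nonempty)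
    (hnhds : ∀ x ∈ W ∩ E, E ∈ 𝓝 x) : E = univ := by
  have hWsub : W ⊆ interior E := by
    refine hW.subset_of_closure_inter_subset isOpen_interior ?_ fun x ⟨hxc, hxW⟩ => ?_
    · obtain ⟨x, hx⟩ := hWE
      exact ⟨x, hx.1, mem_interior_iff_mem_nhds.2 (hnhds x hx)⟩
    · exact mem_interior_iff_mem_nhds.2
        (hnhds x ⟨hxW, closure_minimal interior_subset hE hxc⟩)
  rw [← hE.closure_eq, (hWd.mono (hWsub.trans interior_subset)).closure_eq]

section CoincidenceSet

variable {G B Y : Type*} [Group G] [TopologicalSpace B] [MulAction G B] [ContinuousConstSMul G B]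
  [TopologicalSpace Y] {α β : Y → B}

theorem setOf_smul_eq_mem_nhds (hα : Continuous α) (hβ : Continuous β)
    (horbit : ∀ y, ∃ h : G, h • α y = β y) {y : Y} (hy : α y ∉ upperRamification G)
    {g : G} (hg : g • α y = β y) : {y | g • α y = β y} ∈ 𝓝 y := by
  obtain ⟨V, hV, hyV, hVd⟩ : ∃ V : Set B, IsOpen V ∧ α y ∈ V ∧
      ∀ g : G, g ≠ 1 → Disjoint (g • V) V := not_not.1 hy
  have hgV : β y ∈ g • V := hg ▸ smul_mem_smul_set hyV
  filter_upwards [hα.continuousAt.preimage_mem_nhds (hV.mem_nhds hyV),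
    hβ.continuousAt.preimage_mem_nhds ((hV.smul g).mem_nhds hgV)] with z hzV hzgV
  obtain ⟨h, hh⟩ := horbit z
  by_contra hne
  have hgh : g⁻¹ * h ≠ 1 := fun h1 => hne (inv_mul_eq_one.1 h1 ▸ hh)
  have hmem : (g⁻¹ * h) • α z ∈ V := by
    rw [mul_smul, hh]
    exact mem_smul_set_iff_inv_smul_mem.1 hzgV
  exact (hVd _ hgh).ne_of_mem (smul_mem_smul_set hzV) hmem rfl

theorem isClosed_setOf_smul_eq
    (hsep : ∀ (x : B) (g : G), g • x ≠ x →
      ∃ U V : Set B, IsOpen U ∧ IsOpen V ∧ x ∈ U ∧ g • x ∈ V ∧ Disjoint U V)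
    (hα : Continuous α) (hβ : Continuous β) (horbit : ∀ y, ∃ h : G, h • α y = β y) (g : G) :
    IsClosed {y | g • α y = β y} := by
  refine isOpen_compl_iff.1 (isOpen_iff_mem_nhds.2 fun y hy => ?_)
  obtain ⟨h, hh⟩ := horbit y
  have hshift : (g * h⁻¹) • β y = g • α y := by rw [mul_smul, ← hh, inv_smul_smul]
  obtain ⟨U, V, hU, hV, hyU, hyV, hUV⟩ := hsep (β y) (g * h⁻¹) (hshift ▸ hy)
  rw [hshift] at hyV
  filter_upwards [hβ.continuousAt.preimage_mem_nhds (hU.mem_nhds hyU),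
    (hα.const_smul g).continuousAt.preimage_mem_nhds (hV.mem_nhds hyV)] with z hzU hzV hz
  exact hUV.ne_of_mem hzU hzV hz.symm

end CoincidenceSet

theorem exists_group_elt_of_quotient_eq_general
    {G B A : Type*} [Group G] [TopologicalSpace B]
    [LocallyConnectedSpace B] [MulAction G B]
    (hcont : ∀ g : G, Continuous fun x : B => g • x)
    (b : B → A)
    (hfib : ∀ x y : B, b x = b y ↔ ∃ g : G, g • x = y)
    (hK : IsNegligible (upperRamification G (B := B)))
    (hsep : ∀ (x : B) (g : G), g • x ≠ x →
      ∃ U V : Set B, IsOpen U ∧ IsOpen V ∧ x ∈ U ∧ g • x ∈ V ∧ Disjoint U V)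
    {Y : Type*} [TopologicalSpace Y] [LocallyConnectedSpace Y]
    (hY : IsConnected (Set.univ : Set Y))
    (α β : Y → B) (hα : Diffuse α) (hβ : Diffuse β)
    (hcomm : b ∘ α = b ∘ β) :
    ∃ g : G, ∀ y : Y, g • α y = β y := by
  have : ContinuousConstSMul G B := ⟨hcont⟩
  have horbit : ∀ y, ∃ g : G, g • α y = β y := fun y => (hfib _ _).1 (congrFun hcomm y)
  have hW : IsZDense (α ⁻¹' upperRamification G)ᶜ := hα.isNegligible_preimage hK
  obtain ⟨y₀, hy₀⟩ := (hW.isConnected hY).nonempty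
  obtain ⟨g, hg⟩ := horbit y₀
  have hall : {y | g • α y = β y} = univ :=
    (hW.isConnected hY).isPreconnected.eq_univ_of_isClosed hW.dense_s18
      (isClosed_setOf_smul_eq hsep hα.1 hβ.1 horbit g) ⟨y₀, hy₀, hg⟩
      fun y hy => setOf_smul_eq_mem_nhds hα.1 hβ.1 horbit hy.1 hy.2
  exact ⟨g, eq_univ_iff_forall.1 hall⟩

/-- If the upper ramification set is negligible and distinct points of any orbit
can be separated by open sets, then two diffuse maps `α, β` from a non-empty
connected locally connected space with `b ∘ α = b ∘ β` differ by a single group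
element. -/
theorem exists_group_elt_of_quotient_eq
    {G B A : Type*} [Group G] [Finite G] [TopologicalSpace B]
    [LocallyConnectedSpace B] [TopologicalSpace A] [MulAction G B]
    (hcont : ∀ g : G, Continuous fun x : B => g • x)
    (b : B → A) (hb : Continuous b) (hopen : IsOpenMap b)
    (hsurj : Function.Surjective b)
    (hfib : ∀ x y : B, b x = b y ↔ ∃ g : G, g • x = y)
    (hK : IsNegligible (upperRamification G (B := B)))
    (hsep : ∀ (x : B) (g : G), g • x ≠ x →
      ∃ U V : Set B, IsOpen U ∧ IsOpen V ∧ x ∈ U ∧ g • x ∈ V ∧ Disjoint U V)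
    {Y : Type*} [TopologicalSpace Y] [LocallyConnectedSpace Y]
    (hY : IsConnected (Set.univ : Set Y))
    (α β : Y → B) (hα : Diffuse α) (hβ : Diffuse β)
    (hcomm : b ∘ α = b ∘ β) :
    ∃ g : G, ∀ y : Y, g • α y = β y :=
  exists_group_elt_of_quotient_eq_general hcont b hfib hK hsep hY α β hα hβ hcomm
end

section
/- Let G be a finite group acting on a locally connected space B, b : B → A the open quotient map, K the upper ramification set, assumed negligible, I = b(K). Let V be a connected non-empty open subset of A and W a connected component of b⁻¹V. Then b(W) = V and b⁻¹V = ⋃_{g ∈ G} g·W; moreover V − I is connected and non-empty. -/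
open Set Topology

open Pointwise

/-!
Let `W` be the component of `b⁻¹V` through `x`. Since `b` is open and `B` is locally connected,
`b(W)` is open; so is `V − b(W)`: for `y ∈ b⁻¹V` with `b y ∉ b(W)`, the image of the component `C`
of `y` misses `b(W)`, since `b c = b w` with `c ∈ C`, `w ∈ W` gives `g • c = w`, whence the
connected set `g • C` lies in `W` and `b y = b (g • y) ∈ b(W)`. Connectedness of `V` forces
`b(W) = V`, and the fibres of `b` being orbits turns this into `b⁻¹V = ⋃ g • W`. Finally `K` is
`G`-invariant, so `V − b(K) = b(W − K)`, which is connected because `K` is negligible.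
-/

section OrbitMap

variable {G B A : Type*} [Group G] [MulAction G B] {b : B → A}

lemma preimage_image_eq_iUnion_smul (hfib : ∀ x y : B, b x = b y ↔ ∃ g : G, g • x = y)
    (s : Set B) : b ⁻¹' (b '' s) = ⋃ g : G, g • s := by
  ext y
  simp only [mem_preimage, mem_image, mem_iUnion, mem_smul_set]
  constructor
  · rintro ⟨w, hw, hwy⟩
    obtain ⟨g, rfl⟩ := (hfib w y).1 hwy
    exact ⟨g, w, hw, rfl⟩
  · rintro ⟨g, w, hw, rfl⟩
    exact ⟨w, hw, (hfib w _).2 ⟨g, rfl⟩⟩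

lemma preimage_image_eq_of_smul_mem (hfib : ∀ x y : B, b x = b y ↔ ∃ g : G, g • x = y)
    {s : Set B} (hs : ∀ (g : G), ∀ x ∈ s, g • x ∈ s) : b ⁻¹' (b '' s) = s := by
  rw [preimage_image_eq_iUnion_smul hfib]
  refine Subset.antisymm (iUnion_subset fun g => ?_) fun x hx => mem_iUnion.2 ⟨1, by simpa⟩
  rintro _ ⟨x, hx, rfl⟩
  exact hs g x hx

variable [TopologicalSpace B] [TopologicalSpace A] [ContinuousConstSMul G B]
  [LocallyConnectedSpace B]

lemma isOpen_diff_image_connectedComponentIn (hopen : IsOpenMap b)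
    (hsurj : Function.Surjective b) (hfib : ∀ x y : B, b x = b y ↔ ∃ g : G, g • x = y)
    {V : Set A} (hV : IsOpen (b ⁻¹' V)) (x : B) :
    IsOpen (V \ b '' connectedComponentIn (b ⁻¹' V) x) := by
  set W := connectedComponentIn (b ⁻¹' V) x
  refine isOpen_iff_forall_mem_open.2 fun a ⟨haV, haW⟩ => ?_
  obtain ⟨y, rfl⟩ := hsurj a
  set C := connectedComponentIn (b ⁻¹' V) y
  refine ⟨b '' C, ?_, hopen _ hV.connectedComponentIn, y, mem_connectedComponentIn haV, rfl⟩
  rintro _ ⟨c, hc, rfl⟩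
  refine ⟨connectedComponentIn_subset (b ⁻¹' V) y hc, ?_⟩
  rintro ⟨w, hw, hwc⟩
  obtain ⟨g, hgc⟩ := (hfib c w).1 hwc.symm
  have hinv : b ⁻¹' V ⊆ (g • ·) ⁻¹' (b ⁻¹' V) := fun z hz => by
    simpa only [mem_preimage, (hfib z _).2 ⟨g, rfl⟩] using hz
  have hgC : g • C ⊆ W := by
    rw [show W = _ from connectedComponentIn_eq hw]
    refine (isPreconnected_connectedComponentIn.image _
      (continuous_const_smul g).continuousOn).subset_connectedComponentIn
      ⟨c, hc, hgc⟩ ?_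
    exact image_subset_iff.2 ((connectedComponentIn_subset _ _).trans hinv)
  exact haW ⟨g • y, hgC (smul_mem_smul_set (mem_connectedComponentIn haV)),
    ((hfib y _).2 ⟨g, rfl⟩).symm⟩

lemma image_connectedComponentIn_preimage (hb : Continuous b) (hopen : IsOpenMap b)
    (hsurj : Function.Surjective b) (hfib : ∀ x y : B, b x = b y ↔ ∃ g : G, g • x = y)
    {V : Set A} (hV : IsOpen V) (hVconn : IsPreconnected V) {x : B} (hx : x ∈ b ⁻¹' V) :
    b '' connectedComponentIn (b ⁻¹' V) x = V := by
  have hPo : IsOpen (b ⁻¹' V) := hV.preimage hb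
  refine Subset.antisymm (image_subset_iff.2 (connectedComponentIn_subset _ _)) ?_
  refine hVconn.subset_left_of_subset_union (hopen _ hPo.connectedComponentIn)
    (isOpen_diff_image_connectedComponentIn hopen hsurj hfib hPo x) disjoint_sdiff_right
    (by rw [union_sdiff_self]; exact subset_union_right)
    ⟨b x, hx, x, mem_connectedComponentIn hx, rfl⟩

end OrbitMap

lemma smul_mem_upperRamification {G B : Type*} [Group G] [TopologicalSpace B] [MulAction G B]
    [ContinuousConstSMul G B] {k : B} (hk : k ∈ upperRamification G (B := B)) (g : G) :
    g • k ∈ upperRamification G (B := B) := by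
  rintro ⟨U, hUo, hkU, hdis⟩
  refine hk ⟨g⁻¹ • U, hUo.smul _, mem_smul_set_iff_inv_smul_mem.2 (by simpa using hkU),
    fun h hh => ?_⟩
  have hconj : g * h * g⁻¹ ≠ 1 := by
    rwa [Ne, mul_inv_eq_one, mul_eq_left]
  have hd := disjoint_smul_set (a := g⁻¹) |>.2 (hdis _ hconj)
  rwa [smul_smul, show g⁻¹ * (g * h * g⁻¹) = h * g⁻¹ by group, ← smul_smul] at hd

theorem quotient_component_saturation_general
    {G B A : Type*} [Group G] [TopologicalSpace B]
    [LocallyConnectedSpace B] [TopologicalSpace A] [MulAction G B]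
    (hcont : ∀ g : G, Continuous fun x : B => g • x)
    (b : B → A) (hb : Continuous b) (hopen : IsOpenMap b)
    (hsurj : Function.Surjective b)
    (hfib : ∀ x y : B, b x = b y ↔ ∃ g : G, g • x = y)
    (hK : IsNegligible (upperRamification G (B := B)))
    (V : Set A) (hV : IsOpen V) (hVconn : IsConnected V)
    (W : Set B) (x : B) (hx : x ∈ b ⁻¹' V)
    (hW : W = connectedComponentIn (b ⁻¹' V) x) :
    b '' W = V ∧ (b ⁻¹' V = ⋃ g : G, g • W) ∧
      IsConnected (V \ (b '' upperRamification G (B := B))) := by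
  have : ContinuousConstSMul G B := ⟨hcont⟩
  have hbW : b '' W = V :=
    hW ▸ image_connectedComponentIn_preimage hb hopen hsurj hfib hV hVconn.isPreconnected hx
  refine ⟨hbW, by rw [← hbW, preimage_image_eq_iUnion_smul hfib], ?_⟩
  have hWK : IsConnected (W \ upperRamification G) := by
    rw [sdiff_eq, inter_comm, hW]
    exact hK.2 _ (hV.preimage hb).connectedComponentIn
      (isConnected_connectedComponentIn_iff.2 hx)
  rw [← hbW, ← image_sdiff_preimage,
    preimage_image_eq_of_smul_mem hfib fun g _ hk => smul_mem_upperRamification hk g]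
  exact hWK.image b hb.continuousOn

/-- For `V` a connected non-empty open subset of `A` and `W` a connected
component of `b⁻¹V`: `b(W) = V`, `b⁻¹V = ⋃_{g ∈ G} g • W`, and `V − b(K)` is
connected and non-empty. -/
theorem quotient_component_saturation
    {G B A : Type*} [Group G] [Finite G] [TopologicalSpace B]
    [LocallyConnectedSpace B] [TopologicalSpace A] [MulAction G B]
    (hcont : ∀ g : G, Continuous fun x : B => g • x)
    (b : B → A) (hb : Continuous b) (hopen : IsOpenMap b)
    (hsurj : Function.Surjective b)
    (hfib : ∀ x y : B, b x = b y ↔ ∃ g : G, g • x = y)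
    (hK : IsNegligible (upperRamification G (B := B)))
    (V : Set A) (hV : IsOpen V) (hVconn : IsConnected V)
    (W : Set B) (x : B) (hx : x ∈ b ⁻¹' V)
    (hW : W = connectedComponentIn (b ⁻¹' V) x) :
    b '' W = V ∧ (b ⁻¹' V = ⋃ g : G, g • W) ∧
      IsConnected (V \ (b '' upperRamification G (B := B))) :=
  quotient_component_saturation_general hcont b hb hopen hsurj hfib hK V hV hVconn W x hx hW
end
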